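/- Under the bijection of the previous setting, if V is uniformly (Haar) distributed over the set 𝒰_{A=VB} of orthogonal matrices satisfying A = VB (A, B fixed N×m full-column-rank matrices), then Ṽ = (U_A^⊥)ᵀ V U_B^⊥ is Haar distributed over the orthogonal group O(N−m). -/

import Mathlib

/-!
For `V` orthogonal with `A = V B` we have `Vᵀ U_A^∥ = U_B^∥`, so the compression
`Ṽ = (U_A^⊥)ᵀ V U_B^⊥` is orthogonal. Conversely an orthogonal `Q̃` lifts to
`Q = U_B^∥ (U_B^∥)ᵀ + U_B^⊥ Q̃ (U_B^⊥)ᵀ`, which is orthogonal, fixes `B` (whose columns lie in the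
span of `U_B^∥`) and satisfies `Q U_B^⊥ = U_B^⊥ Q̃`. Thus `V ↦ V Q` is carried to `Ṽ ↦ Ṽ Q̃` by the
compression, and invariance of the law of `V` under the former gives invariance of the law of `Ṽ`
under the latter.
-/

open Matrix MeasureTheory

instance matrixMeasurableSpace {n m : Type*} : MeasurableSpace (Matrix n m ℝ) :=
  MeasurableSpace.pi (X := fun _ : n => m → ℝ)

-- The product σ-algebra above is the Borel one, so continuous maps are measurable.
instance Matrix.borelSpace {n m : Type*} [Countable n] [Countable m] :
    BorelSpace (Matrix n m ℝ) :=
  inferInstanceAs (BorelSpace (n → m → ℝ))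

namespace Matrix

variable {R : Type*} [CommRing R] {n k l : Type*}

theorem exists_eq_mul_of_range_mulVecLin_le [Fintype k] [DecidableEq k] [Fintype l]
    {B : Matrix n k R} {P : Matrix n l R}
    (h : LinearMap.range B.mulVecLin ≤ LinearMap.range P.mulVecLin) :
    ∃ X : Matrix l k R, B = P * X := by
  have hcol : ∀ j, ∃ x, P *ᵥ x = fun i => B i j := fun j =>
    h ⟨Pi.single j 1, by ext i; simp [mulVec_single]⟩
  choose x hx using hcol
  refine ⟨(of x)ᵀ, ?_⟩
  ext i j
  rw [← congrFun (hx j) i]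
  simp [mul_apply, mulVec, dotProduct]

/-- `[P Q]` is an orthogonal matrix. -/
structure IsOrthogonalSplit [Fintype n] [DecidableEq n] [Fintype k] [DecidableEq k] [Fintype l]
    [DecidableEq l] (P : Matrix n k R) (Q : Matrix n l R) : Prop where
  fst_transpose_mul_self : Pᵀ * P = 1
  snd_transpose_mul_self : Qᵀ * Q = 1
  fst_transpose_mul_snd : Pᵀ * Q = 0
  mul_transpose_add_mul_transpose : P * Pᵀ + Q * Qᵀ = 1

theorem submatrix_id_transpose_mul_submatrix_id [Fintype n] {m : Type*} (U : Matrix n m R)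
    (f : k → m) (g : l → m) :
    (U.submatrix id f)ᵀ * U.submatrix id g = (Uᵀ * U).submatrix f g := by
  rw [transpose_submatrix, submatrix_mul _ _ _ _ _ Function.bijective_id]

theorem mul_transpose_eq_castAdd_add_natAdd {m p : ℕ} (U : Matrix n (Fin (m + p)) R) :
    U * Uᵀ = U.submatrix id (Fin.castAdd p) * (U.submatrix id (Fin.castAdd p))ᵀ
      + U.submatrix id (Fin.natAdd m) * (U.submatrix id (Fin.natAdd m))ᵀ := by
  ext i j
  simp [mul_apply, Fin.sum_univ_add]

theorem IsOrthogonalSplit.of_transpose_mul_self {m p : ℕ}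
    {U : Matrix (Fin (m + p)) (Fin (m + p)) R} (hU : Uᵀ * U = 1) :
    IsOrthogonalSplit (U.submatrix id (Fin.castAdd p)) (U.submatrix id (Fin.natAdd m)) where
  fst_transpose_mul_self := by
    rw [submatrix_id_transpose_mul_submatrix_id, hU, submatrix_one _ (Fin.castAdd_injective m p)]
  snd_transpose_mul_self := by
    rw [submatrix_id_transpose_mul_submatrix_id, hU, submatrix_one _ (Fin.natAdd_injective p m)]
  fst_transpose_mul_snd := by
    ext i j
    rw [submatrix_id_transpose_mul_submatrix_id, hU]
    simp [Fin.ext_iff, Nat.ne_of_lt (Nat.lt_add_right j.val i.isLt)]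
  mul_transpose_add_mul_transpose := by
    rw [← mul_transpose_eq_castAdd_add_natAdd, mul_eq_one_comm.mp hU]

/-- For `[P Q]` and `W` orthogonal: the orthogonal matrix acting as `W` on the span of `Q` and as
the identity on that of `P`. -/
def orthogonalLift [Fintype k] (P : Matrix n k R) [Fintype l] (Q : Matrix n l R)
    (W : Matrix l l R) : Matrix n n R :=
  P * Pᵀ + Q * W * Qᵀ

namespace IsOrthogonalSplit

variable [Fintype n] [DecidableEq n] [Fintype k] [DecidableEq k] [Fintype l] [DecidableEq l]
  {P : Matrix n k R} {Q : Matrix n l R}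

theorem snd_transpose_mul_fst (h : IsOrthogonalSplit P Q) : Qᵀ * P = 0 := by
  simpa using congrArg transpose h.fst_transpose_mul_snd

theorem orthogonal_snd_transpose_mul_mul_snd {P' : Matrix n k R} {Q' : Matrix n l R}
    (h' : IsOrthogonalSplit P' Q') (h : IsOrthogonalSplit P Q) {V : Matrix n n R}
    (hV : Vᵀ * V = 1) (hVP : P' = V * P) :
    (Q'ᵀ * V * Q)ᵀ * (Q'ᵀ * V * Q) = 1 := by
  have hVtP' : Vᵀ * P' = P := by rw [hVP, ← Matrix.mul_assoc, hV, Matrix.one_mul]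
  have hQ' : Q' * Q'ᵀ = 1 - P' * P'ᵀ := eq_sub_of_add_eq' h'.mul_transpose_add_mul_transpose
  calc (Q'ᵀ * V * Q)ᵀ * (Q'ᵀ * V * Q)
      = Qᵀ * Vᵀ * (Q' * Q'ᵀ) * V * Q := by
        simp only [transpose_mul, transpose_transpose, Matrix.mul_assoc]
    _ = Qᵀ * (Vᵀ * V) * Q - (Qᵀ * (Vᵀ * P')) * (Qᵀ * (Vᵀ * P'))ᵀ := by
        rw [hQ']
        simp only [transpose_mul, transpose_transpose, Matrix.mul_sub, Matrix.sub_mul,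
          Matrix.mul_one, Matrix.mul_assoc]
    _ = 1 := by
        rw [hV, hVtP', Matrix.mul_one, h.snd_transpose_mul_self, h.snd_transpose_mul_fst,
          Matrix.zero_mul, sub_zero]

theorem orthogonalLift_transpose_mul_self (h : IsOrthogonalSplit P Q) {W : Matrix l l R}
    (hW : Wᵀ * W = 1) : (orthogonalLift P Q W)ᵀ * orthogonalLift P Q W = 1 := by
  have hPP := h.fst_transpose_mul_self
  have hQQ := h.snd_transpose_mul_self
  have hPQ := h.fst_transpose_mul_snd
  have hQP := h.snd_transpose_mul_fst
  calc (orthogonalLift P Q W)ᵀ * orthogonalLift P Q W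
      = P * (Pᵀ * P) * Pᵀ + P * (Pᵀ * Q) * W * Qᵀ + Q * Wᵀ * (Qᵀ * P) * Pᵀ
          + Q * Wᵀ * (Qᵀ * Q) * W * Qᵀ := by
        simp only [orthogonalLift, transpose_add, transpose_mul, transpose_transpose,
          Matrix.add_mul, Matrix.mul_add, Matrix.mul_assoc]
        abel
    _ = P * Pᵀ + Q * (Wᵀ * W) * Qᵀ := by
        simp only [hPP, hQQ, hPQ, hQP, Matrix.mul_one, Matrix.mul_zero, Matrix.zero_mul,
          add_zero, Matrix.mul_assoc]
    _ = 1 := by rw [hW, Matrix.mul_one, h.mul_transpose_add_mul_transpose]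

theorem orthogonalLift_mul_snd (h : IsOrthogonalSplit P Q) (W : Matrix l l R) :
    orthogonalLift P Q W * Q = Q * W := by
  simp only [orthogonalLift, Matrix.add_mul, Matrix.mul_assoc, h.fst_transpose_mul_snd,
    h.snd_transpose_mul_self, Matrix.mul_zero, Matrix.mul_one, zero_add]

theorem orthogonalLift_mul_fst_mul {m : Type*} (h : IsOrthogonalSplit P Q) (W : Matrix l l R)
    (X : Matrix k m R) : orthogonalLift P Q W * (P * X) = P * X := by
  simp only [orthogonalLift, Matrix.add_mul, Matrix.mul_assoc, ← Matrix.mul_assoc Pᵀ P,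
    ← Matrix.mul_assoc Qᵀ P, h.fst_transpose_mul_self, h.snd_transpose_mul_fst, Matrix.one_mul,
    Matrix.zero_mul, Matrix.mul_zero, add_zero]

end IsOrthogonalSplit

end Matrix

theorem stmt_14_general (m p : ℕ)
    (A B : Matrix (Fin (m + p)) (Fin m) ℝ)
    (UA UB : Matrix (Fin (m + p)) (Fin (m + p)) ℝ)
    (hUA : UAᵀ * UA = 1) (hUB : UBᵀ * UB = 1)
    (UApar : Matrix (Fin (m + p)) (Fin m) ℝ) (hUApar : UApar = UA.submatrix id (Fin.castAdd p))
    (UAperp : Matrix (Fin (m + p)) (Fin p) ℝ) (hUAperp : UAperp = UA.submatrix id (Fin.natAdd m))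
    (UBpar : Matrix (Fin (m + p)) (Fin m) ℝ) (hUBpar : UBpar = UB.submatrix id (Fin.castAdd p))
    (UBperp : Matrix (Fin (m + p)) (Fin p) ℝ) (hUBperp : UBperp = UB.submatrix id (Fin.natAdd m))
    (hspanB : LinearMap.range UBpar.mulVecLin = LinearMap.range B.mulVecLin)
    (hpar : ∀ V : Matrix (Fin (m + p)) (Fin (m + p)) ℝ,
      Vᵀ * V = 1 → A = V * B → UApar = V * UBpar)
    (μ : Measure (Matrix (Fin (m + p)) (Fin (m + p)) ℝ)) [IsProbabilityMeasure μ]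
    -- μ is carried by the set 𝒰 = {V | V orthogonal, A = VB} (assumed nonempty)
    (hsupp : μ {V | ¬ (Vᵀ * V = 1 ∧ A = V * B)} = 0)
    -- uniformity: invariance under right multiplication by any orthogonal Q with QB = B
    (hinv : ∀ Q : Matrix (Fin (m + p)) (Fin (m + p)) ℝ, Qᵀ * Q = 1 → Q * B = B →
      Measure.map (fun V => V * Q) μ = μ) :
    IsProbabilityMeasure (Measure.map (fun V => UAperpᵀ * V * UBperp) μ) ∧
      (Measure.map (fun V => UAperpᵀ * V * UBperp) μ) {W | ¬ Wᵀ * W = 1} = 0 ∧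
      ∀ Qt : Matrix (Fin p) (Fin p) ℝ, Qtᵀ * Qt = 1 →
        Measure.map (fun W => W * Qt) (Measure.map (fun V => UAperpᵀ * V * UBperp) μ) =
          Measure.map (fun V => UAperpᵀ * V * UBperp) μ := by
  have hA : IsOrthogonalSplit UApar UAperp :=
    hUApar ▸ hUAperp ▸ IsOrthogonalSplit.of_transpose_mul_self hUA
  have hB : IsOrthogonalSplit UBpar UBperp :=
    hUBpar ▸ hUBperp ▸ IsOrthogonalSplit.of_transpose_mul_self hUB
  obtain ⟨X, hBX⟩ := exists_eq_mul_of_range_mulVecLin_le hspanB.ge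
  have hf : Measurable fun V : Matrix (Fin (m + p)) (Fin (m + p)) ℝ => UAperpᵀ * V * UBperp :=
    ((continuous_const.matrix_mul continuous_id).matrix_mul continuous_const).measurable
  have hmul {a b : ℕ} (Q : Matrix (Fin b) (Fin b) ℝ) :
      Measurable fun V : Matrix (Fin a) (Fin b) ℝ => V * Q :=
    (continuous_id.matrix_mul continuous_const).measurable
  refine ⟨Measure.isProbabilityMeasure_map hf.aemeasurable, ?_, fun Qt hQt => ?_⟩
  · have hO : MeasurableSet {W : Matrix (Fin p) (Fin p) ℝ | ¬ Wᵀ * W = 1} :=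
      (isClosed_eq (continuous_id.matrix_transpose.matrix_mul continuous_id)
        continuous_const).measurableSet.compl
    rw [Measure.map_apply hf hO]
    refine measure_mono_null ?_ hsupp
    rintro V hV ⟨hVorth, hVB⟩
    exact hV (hA.orthogonal_snd_transpose_mul_mul_snd hB hVorth (hpar V hVorth hVB))
  · have hQ : MeasurePreserving (fun V => V * orthogonalLift UBpar UBperp Qt) μ μ :=
      ⟨hmul _, hinv _ (hB.orthogonalLift_transpose_mul_self hQt)
        (hBX ▸ hB.orthogonalLift_mul_fst_mul Qt X)⟩
    have hsemiconj : Function.Semiconj (fun V => UAperpᵀ * V * UBperp)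
        (fun V => V * orthogonalLift UBpar UBperp Qt) (fun W => W * Qt) := fun V => by
      simp only [Matrix.mul_assoc, hB.orthogonalLift_mul_snd Qt]
    exact (hf.measurePreserving μ |>.of_semiconj hQ hsemiconj (hmul Qt)).map_eq

/-- Conditional Haar: if V is uniformly distributed over the orthogonal matrices
satisfying A = VB (i.e. the law is carried by this set and invariant under right
multiplication by any orthogonal Q preserving the set), then
Ṽ = (U_A^⊥)ᵀ V U_B^⊥ is Haar distributed over O(N−m). -/
theorem stmt_14 (m p : ℕ)
    (A B : Matrix (Fin (m + p)) (Fin m) ℝ)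
    (hrankA : A.rank = m) (hrankB : B.rank = m)
    (UA UB : Matrix (Fin (m + p)) (Fin (m + p)) ℝ)
    (hUA : UAᵀ * UA = 1) (hUB : UBᵀ * UB = 1)
    (UApar : Matrix (Fin (m + p)) (Fin m) ℝ) (hUApar : UApar = UA.submatrix id (Fin.castAdd p))
    (UAperp : Matrix (Fin (m + p)) (Fin p) ℝ) (hUAperp : UAperp = UA.submatrix id (Fin.natAdd m))
    (UBpar : Matrix (Fin (m + p)) (Fin m) ℝ) (hUBpar : UBpar = UB.submatrix id (Fin.castAdd p))
    (UBperp : Matrix (Fin (m + p)) (Fin p) ℝ) (hUBperp : UBperp = UB.submatrix id (Fin.natAdd m))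
    (hspanA : LinearMap.range UApar.mulVecLin = LinearMap.range A.mulVecLin)
    (hspanB : LinearMap.range UBpar.mulVecLin = LinearMap.range B.mulVecLin)
    (hpar : ∀ V : Matrix (Fin (m + p)) (Fin (m + p)) ℝ,
      Vᵀ * V = 1 → A = V * B → UApar = V * UBpar)
    (μ : Measure (Matrix (Fin (m + p)) (Fin (m + p)) ℝ)) [IsProbabilityMeasure μ]
    -- μ is carried by the set 𝒰 = {V | V orthogonal, A = VB} (assumed nonempty)
    (hne : ∃ V : Matrix (Fin (m + p)) (Fin (m + p)) ℝ, Vᵀ * V = 1 ∧ A = V * B)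
    (hsupp : μ {V | ¬ (Vᵀ * V = 1 ∧ A = V * B)} = 0)
    -- uniformity: invariance under right multiplication by any orthogonal Q with QB = B
    (hinv : ∀ Q : Matrix (Fin (m + p)) (Fin (m + p)) ℝ, Qᵀ * Q = 1 → Q * B = B →
      Measure.map (fun V => V * Q) μ = μ) :
    IsProbabilityMeasure (Measure.map (fun V => UAperpᵀ * V * UBperp) μ) ∧
      (Measure.map (fun V => UAperpᵀ * V * UBperp) μ) {W | ¬ Wᵀ * W = 1} = 0 ∧
      ∀ Qt : Matrix (Fin p) (Fin p) ℝ, Qtᵀ * Qt = 1 →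
        Measure.map (fun W => W * Qt) (Measure.map (fun V => UAperpᵀ * V * UBperp) μ) =
          Measure.map (fun V => UAperpᵀ * V * UBperp) μ :=
  stmt_14_general m p A B UA UB hUA hUB UApar hUApar UAperp hUAperp UBpar hUBpar UBperp hUBperp
    hspanB hpar μ hsupp hinv
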